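/- Under the rounded binary-tree process with parameter δ ∈ (0,1), let S = Σ_{l ∈ L(root)} score(l) denote the total leaf score and let δ' ≥ 2√δ. Then Var(X_root) ≤ δ·S², and consequently P( |X_root − S| > δ'·S ) ≤ δ/δ'² ≤ 1/4. -/

import Mathlib

open MeasureTheory ProbabilityTheory
open scoped ENNReal

/-- `⌊log_{1+δ} y⌋` as a natural number (for `y ≥ 1` the logarithm is nonnegative). -/
noncomputable def rExp (δ y : ℝ) : ℕ := ⌊Real.logb (1 + δ) y⌋₊

/-- `⌊y⌋_δ = (1+δ)^{⌊log_{1+δ} y⌋}`. -/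
noncomputable def rfloor (δ y : ℝ) : ℝ := (1 + δ) ^ rExp δ y

/-- `⌈y⌉_δ = (1+δ)^{⌈log_{1+δ} y⌉}`. -/
noncomputable def rceil (δ y : ℝ) : ℝ := (1 + δ) ^ (⌈Real.logb (1 + δ) y⌉₊)

/-- The probability `k / (δ(1+δ)^r)` (where `y = (1+δ)^r + k`) that the randomized
rounding rounds up. -/
noncomputable def roundUpProb (δ y : ℝ) : ℝ≥0∞ :=
  ENNReal.ofReal ((y - rfloor δ y) / (δ * rfloor δ y))

/-- The randomized rounding `Round_δ(y)`: equal to `(1+δ)^r` with probability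
`(δ(1+δ)^r − k)/(δ(1+δ)^r)` and to `(1+δ)^{r+1}` with probability `k/(δ(1+δ)^r)`,
where `y = (1+δ)^r + k`, `r = ⌊log_{1+δ} y⌋` and `k ∈ [0, δ(1+δ)^r)`.
(For `δ > 0` and `y ≥ 1` the probability `k/(δ(1+δ)^r)` lies in `[0,1)`, so the
clamping `min · 1` below is vacuous.) -/
noncomputable def roundPMF (δ y : ℝ) : PMF ℝ :=
  (PMF.bernoulli (min (roundUpProb δ y).toNNReal 1) (min_le_right _ _)).map
    (fun b => if b then (1 + δ) ^ (rExp δ y + 1) else rfloor δ y)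

/-- Expectation of a real-valued probability mass function. -/
noncomputable def pmfExp (p : PMF ℝ) : ℝ := ∫ x, x ∂p.toMeasure

/-- Variance of a real-valued probability mass function. -/
noncomputable def pmfVar (p : PMF ℝ) : ℝ := variance (fun x => x) p.toMeasure

/-- A finite rooted binary tree in which every internal node has exactly two children and
every leaf carries a real score. -/
inductive BTree where
  | leaf (score : ℝ)
  | node (l r : BTree)

/-- The list of scores of the leaves of (the subtree rooted at) `t`. -/
def BTree.leafScores : BTree → List ℝ
  | .leaf y => [y]
  | .node l r => l.leafScores ++ r.leafScores

/-- The distribution of the random variable `X_v` of the rounded binary-tree process at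
the root of `t`: at a leaf, `X_l = Round_δ(score(l))`, independently across leaves; at an
internal node `v` with children `v1, v2`, conditioned on `X_{v1}` and `X_{v2}`,
`X_v = Round_δ(X_{v1} + X_{v2})`. -/
noncomputable def treePMF (δ : ℝ) : BTree → PMF ℝ
  | .leaf y => roundPMF δ y
  | .node l r => (treePMF δ l).bind fun x => (treePMF δ r).bind fun y => roundPMF δ (x + y)

/-- `Σ_{g < h} L_g · L_h`, the sum over unordered pairs of distinct positions of a list. -/
noncomputable def pairSum (L : List ℝ) : ℝ :=
  ∑ p ∈ (Finset.range L.length ×ˢ Finset.range L.length).filter (fun p => p.1 < p.2),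
    L.getD p.1 0 * L.getD p.2 0

/-!
Every rounding is unbiased, so `E[X_v]` is the total score `S_v` below `v`. Rounding
`y = (1+δ)^r + k` adds variance `k (δ(1+δ)^r - k) ≤ δ y k`. At a leaf `k ≤ y`; at an internal
node both children are powers of `1+δ` and the larger one is at most `⌊a+b⌋_δ`, so
`k ≤ min a b` and the added variance is at most `2δab`. As the two subtrees are independent,
`E[X_v²] ≤ (1+δ) S_v²` propagates up the tree, i.e. `Var(X_root) ≤ δ S²`, and Chebyshev's
inequality with `4δ ≤ δ'²` gives the tail bound.

Moments are taken as lower Lebesgue integrals of `ENNReal.ofReal`, which pass through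
`PMF.bind` without integrability side conditions.
-/

namespace PMF
variable {α β : Type*} [MeasurableSpace α] [MeasurableSingletonClass α]
  [MeasurableSpace β] [MeasurableSingletonClass β]

theorem toMeasure_eq_sum_smul_dirac (p : PMF α) :
    p.toMeasure = Measure.sum fun a => p a • Measure.dirac a := by
  ext s hs
  rw [toMeasure_apply_eq_tsum, Measure.sum_apply _ hs]
  refine tsum_congr fun a => ?_
  by_cases ha : a ∈ s <;> simp [Measure.dirac_apply' _ hs, ha]

theorem lintegral_eq_tsum (p : PMF α) (f : α → ℝ≥0∞) :
    ∫⁻ a, f a ∂p.toMeasure = ∑' a, p a * f a := by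
  simp [toMeasure_eq_sum_smul_dirac, lintegral_sum_measure, lintegral_smul_measure]

theorem lintegral_bind (p : PMF α) (q : α → PMF β) (f : β → ℝ≥0∞) :
    ∫⁻ b, f b ∂(p.bind q).toMeasure = ∫⁻ a, ∫⁻ b, f b ∂(q a).toMeasure ∂p.toMeasure := by
  simp only [lintegral_eq_tsum, bind_apply, ← ENNReal.tsum_mul_right, ← ENNReal.tsum_mul_left]
  rw [ENNReal.tsum_comm]
  simp [mul_assoc]

theorem lintegral_map (p : PMF α) (g : α → β) (f : β → ℝ≥0∞) :
    ∫⁻ b, f b ∂(p.map g).toMeasure = ∫⁻ a, f (g a) ∂p.toMeasure := by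
  simp [← bind_pure_comp, lintegral_bind, toMeasure_pure]

theorem ae_mem_support (p : PMF α) : ∀ᵐ a ∂p.toMeasure, a ∈ p.support := by
  rw [ae_iff]
  exact (p.toMeasure_apply_eq_zero_iff p.support_countable.measurableSet.compl).2
    disjoint_compl_right

end PMF

section Rounding

variable {δ y : ℝ}

theorem roundPMF_support_subset :
    (roundPMF δ y).support ⊆ Set.range ((1 + δ) ^ · : ℕ → ℝ) := by
  rw [roundPMF, PMF.support_map]
  rintro _ ⟨b, -, rfl⟩
  cases b
  · exact ⟨rExp δ y, rfl⟩
  · exact ⟨rExp δ y + 1, rfl⟩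

theorem rfloor_pos (hδ : 0 < δ) : 0 < rfloor δ y := pow_pos (by linarith) _

variable (hδ : 0 < δ) (hy : 1 ≤ y)
include hδ hy

theorem rfloor_le : rfloor δ y ≤ y := by
  have hb : 1 < 1 + δ := by linarith
  calc rfloor δ y = (1 + δ) ^ (rExp δ y : ℝ) := (Real.rpow_natCast _ _).symm
    _ ≤ (1 + δ) ^ Real.logb (1 + δ) y :=
      Real.rpow_le_rpow_of_exponent_le hb.le (Nat.floor_le (Real.logb_nonneg hb hy))
    _ = y := Real.rpow_logb (by linarith) hb.ne' (by linarith)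

theorem lt_rfloor_mul : y < rfloor δ y * (1 + δ) := by
  have hb : 1 < 1 + δ := by linarith
  calc y = (1 + δ) ^ Real.logb (1 + δ) y := (Real.rpow_logb (by linarith) hb.ne' (by linarith)).symm
    _ < (1 + δ) ^ ((rExp δ y + 1 : ℕ) : ℝ) := by
      apply Real.rpow_lt_rpow_of_exponent_lt hb
      push_cast
      exact Nat.lt_floor_add_one _
    _ = rfloor δ y * (1 + δ) := by rw [Real.rpow_natCast, pow_succ, rfloor]

theorem pow_le_rfloor {m : ℕ} (h : (1 + δ) ^ m ≤ y) : (1 + δ) ^ m ≤ rfloor δ y := by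
  have hb : 1 < 1 + δ := by linarith
  refine pow_le_pow_right₀ hb.le (Nat.le_floor ?_)
  rwa [← Real.rpow_le_rpow_left_iff hb, Real.rpow_logb (by linarith) hb.ne' (by linarith),
    Real.rpow_natCast]

theorem sub_rfloor_div_mem_Icc : (y - rfloor δ y) / (δ * rfloor δ y) ∈ Set.Icc 0 1 := by
  have hF := rfloor_pos (y := y) hδ
  refine ⟨div_nonneg (by linarith [rfloor_le hδ hy]) (by positivity), ?_⟩
  rw [div_le_one (by positivity)]
  linarith [lt_rfloor_mul hδ hy]

theorem lintegral_roundPMF (f : ℝ → ℝ≥0∞) :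
    ∫⁻ x, f x ∂(roundPMF δ y).toMeasure =
      (1 - roundUpProb δ y) * f (rfloor δ y) + roundUpProb δ y * f (rfloor δ y * (1 + δ)) := by
  have hp : roundUpProb δ y ≤ 1 := ENNReal.ofReal_le_one.2 (sub_rfloor_div_mem_Icc hδ hy).2
  have hmin : ((min (roundUpProb δ y).toNNReal 1 : NNReal) : ℝ≥0∞) = roundUpProb δ y := by
    rw [ENNReal.coe_min, ENNReal.coe_toNNReal (ne_top_of_le_ne_top ENNReal.one_ne_top hp),
      ENNReal.coe_one, min_eq_left hp]
  rw [roundPMF, PMF.lintegral_map, PMF.lintegral_eq_tsum, tsum_bool]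
  simp only [PMF.bernoulli_apply, cond_false, cond_true, Bool.false_eq_true, if_false, if_true,
    ENNReal.coe_sub, ENNReal.coe_one, hmin]
  rw [pow_succ]
  rfl

theorem lintegral_roundPMF_ofReal {g : ℝ → ℝ} (hg : ∀ x, 0 < x → 0 ≤ g x) :
    ∫⁻ x, ENNReal.ofReal (g x) ∂(roundPMF δ y).toMeasure =
      ENNReal.ofReal ((1 - (y - rfloor δ y) / (δ * rfloor δ y)) * g (rfloor δ y) +
        (y - rfloor δ y) / (δ * rfloor δ y) * g (rfloor δ y * (1 + δ))) := by
  have hF := rfloor_pos (y := y) hδ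
  obtain ⟨hu0, hu1⟩ := sub_rfloor_div_mem_Icc hδ hy
  rw [lintegral_roundPMF hδ hy, roundUpProb, ← ENNReal.ofReal_one, ← ENNReal.ofReal_sub _ hu0,
    ← ENNReal.ofReal_mul (by linarith), ← ENNReal.ofReal_mul hu0,
    ← ENNReal.ofReal_add (by nlinarith [hg _ hF]) (mul_nonneg hu0 (hg _ (by positivity)))]

theorem lintegral_roundPMF_ofReal_id :
    ∫⁻ x, ENNReal.ofReal x ∂(roundPMF δ y).toMeasure = ENNReal.ofReal y := by
  rw [lintegral_roundPMF_ofReal hδ hy (g := fun x => x) fun x hx => hx.le]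
  have := rfloor_pos (y := y) hδ
  congr 1
  field_simp
  ring

theorem lintegral_roundPMF_ofReal_sq_le :
    ∫⁻ x, ENNReal.ofReal (x ^ 2) ∂(roundPMF δ y).toMeasure ≤
      ENNReal.ofReal (y ^ 2 + δ * y * (y - rfloor δ y)) := by
  rw [lintegral_roundPMF_ofReal hδ hy (g := (· ^ 2)) fun x _ => sq_nonneg x]
  have hF := rfloor_pos (y := y) hδ
  have hFy := rfloor_le hδ hy
  apply ENNReal.ofReal_le_ofReal
  have : (1 - (y - rfloor δ y) / (δ * rfloor δ y)) * rfloor δ y ^ 2 +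
      (y - rfloor δ y) / (δ * rfloor δ y) * (rfloor δ y * (1 + δ)) ^ 2 =
      y ^ 2 + (y - rfloor δ y) * (δ * rfloor δ y - (y - rfloor δ y)) := by
    field_simp
    ring
  rw [this]
  nlinarith [mul_le_mul_of_nonneg_left hFy (mul_nonneg hδ.le (sub_nonneg.2 hFy))]

end Rounding

theorem one_le_of_mem_range_pow {δ a : ℝ} (hδ : 0 ≤ δ) (ha : a ∈ Set.range ((1 + δ) ^ · : ℕ → ℝ)) :
    1 ≤ a := by
  obtain ⟨n, rfl⟩ := ha
  exact one_le_pow₀ (by linarith)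

theorem add_mul_sub_rfloor_le {δ a b : ℝ} (hδ : 0 < δ)
    (ha : a ∈ Set.range ((1 + δ) ^ · : ℕ → ℝ)) (hb : b ∈ Set.range ((1 + δ) ^ · : ℕ → ℝ)) :
    (a + b) * (a + b - rfloor δ (a + b)) ≤ 2 * a * b := by
  wlog hab : a ≤ b generalizing a b
  · rw [add_comm a b, mul_right_comm]
    exact this hb ha (le_of_not_ge hab)
  have ha1 := one_le_of_mem_range_pow hδ.le ha
  obtain ⟨n, rfl⟩ := hb
  have hbF : (1 + δ) ^ n ≤ rfloor δ (a + (1 + δ) ^ n) :=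
    pow_le_rfloor hδ (by linarith) (by linarith)
  nlinarith

section IndependentSum

variable {μ ν : Measure ℝ} [IsProbabilityMeasure μ] [IsProbabilityMeasure ν]

theorem lintegral_lintegral_ofReal_add (hμ : ∀ᵐ a ∂μ, 0 ≤ a) (hν : ∀ᵐ b ∂ν, 0 ≤ b) :
    ∫⁻ a, ∫⁻ b, ENNReal.ofReal (a + b) ∂ν ∂μ =
      ∫⁻ a, ENNReal.ofReal a ∂μ + ∫⁻ b, ENNReal.ofReal b ∂ν := by
  calc ∫⁻ a, ∫⁻ b, ENNReal.ofReal (a + b) ∂ν ∂μ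
      = ∫⁻ a, ∫⁻ b, (ENNReal.ofReal a + ENNReal.ofReal b) ∂ν ∂μ := by
        refine lintegral_congr_ae (hμ.mono fun a ha => lintegral_congr_ae ?_)
        exact hν.mono fun b hb => ENNReal.ofReal_add ha hb
    _ = _ := by
        simp only [lintegral_add_left measurable_const, lintegral_const, measure_univ, mul_one]
        rw [lintegral_add_right _ measurable_const, lintegral_const, measure_univ, mul_one]

theorem lintegral_lintegral_ofReal_sq_add_mul {c : ℝ} (hc : 0 ≤ c) (hμ : ∀ᵐ a ∂μ, 0 ≤ a)
    (hν : ∀ᵐ b ∂ν, 0 ≤ b) :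
    ∫⁻ a, ∫⁻ b, ENNReal.ofReal (a ^ 2 + b ^ 2 + c * a * b) ∂ν ∂μ =
      ∫⁻ a, ENNReal.ofReal (a ^ 2) ∂μ + ∫⁻ b, ENNReal.ofReal (b ^ 2) ∂ν +
        ENNReal.ofReal c * ((∫⁻ a, ENNReal.ofReal a ∂μ) * ∫⁻ b, ENNReal.ofReal b ∂ν) := by
  calc ∫⁻ a, ∫⁻ b, ENNReal.ofReal (a ^ 2 + b ^ 2 + c * a * b) ∂ν ∂μ
      = ∫⁻ a, ∫⁻ b, (ENNReal.ofReal (a ^ 2) + ENNReal.ofReal (b ^ 2) +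
          ENNReal.ofReal c * (ENNReal.ofReal a * ENNReal.ofReal b)) ∂ν ∂μ := by
        refine lintegral_congr_ae (hμ.mono fun a ha => lintegral_congr_ae ?_)
        refine hν.mono fun b hb => ?_
        dsimp only
        rw [ENNReal.ofReal_add (by positivity) (by positivity),
          ENNReal.ofReal_add (by positivity) (by positivity), ← ENNReal.ofReal_mul ha,
          ← ENNReal.ofReal_mul hc, mul_assoc]
    _ = _ := by
        have hinner : ∀ a : ℝ, ∫⁻ b, (ENNReal.ofReal (a ^ 2) + ENNReal.ofReal (b ^ 2) +
            ENNReal.ofReal c * (ENNReal.ofReal a * ENNReal.ofReal b)) ∂ν =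
            ENNReal.ofReal (a ^ 2) + ∫⁻ b, ENNReal.ofReal (b ^ 2) ∂ν +
              ENNReal.ofReal c * (ENNReal.ofReal a * ∫⁻ b, ENNReal.ofReal b ∂ν) := by
          intro a
          rw [lintegral_add_left (by fun_prop), lintegral_add_left measurable_const,
            lintegral_const, measure_univ, mul_one, lintegral_const_mul _ (by fun_prop),
            lintegral_const_mul _ (by fun_prop)]
        simp_rw [hinner]
        rw [lintegral_add_left (by fun_prop), lintegral_add_left (by fun_prop), lintegral_const,
          measure_univ, mul_one, lintegral_const_mul _ (by fun_prop),
          lintegral_mul_const _ (by fun_prop)]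

end IndependentSum

theorem BTree.one_le_sum_leafScores (t : BTree) (h : ∀ y ∈ t.leafScores, 1 ≤ y) :
    1 ≤ t.leafScores.sum := by
  induction t with
  | leaf y => simpa [leafScores] using h
  | node l r ihl ihr =>
    obtain ⟨hl, hr⟩ := List.forall_mem_append.1 h
    simp only [leafScores, List.sum_append]
    linarith [ihl hl, ihr hr]

section Tree

variable {δ : ℝ}

theorem treePMF_support_subset (t : BTree) :
    (treePMF δ t).support ⊆ Set.range ((1 + δ) ^ · : ℕ → ℝ) := by
  cases t with
  | leaf y => exact roundPMF_support_subset
  | node l r =>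
    intro x hx
    simp only [treePMF, PMF.mem_support_bind_iff] at hx
    obtain ⟨a, -, b, -, hx⟩ := hx
    exact roundPMF_support_subset hx

theorem ae_mem_range_pow_treePMF (t : BTree) :
    ∀ᵐ x ∂(treePMF δ t).toMeasure, x ∈ Set.range ((1 + δ) ^ · : ℕ → ℝ) :=
  (treePMF δ t).ae_mem_support.mono fun _ hx => treePMF_support_subset t hx

theorem ae_nonneg_treePMF (hδ : 0 ≤ δ) (t : BTree) : ∀ᵐ x ∂(treePMF δ t).toMeasure, 0 ≤ x :=
  (ae_mem_range_pow_treePMF t).mono fun _ hx => zero_le_one.trans (one_le_of_mem_range_pow hδ hx)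

theorem lintegral_treePMF_node (l r : BTree) (f : ℝ → ℝ≥0∞) :
    ∫⁻ x, f x ∂(treePMF δ (.node l r)).toMeasure =
      ∫⁻ a, ∫⁻ b, ∫⁻ x, f x ∂(roundPMF δ (a + b)).toMeasure ∂(treePMF δ r).toMeasure
        ∂(treePMF δ l).toMeasure := by
  simp only [treePMF, PMF.lintegral_bind]

theorem lintegral_treePMF_node_ofReal_id (hδ : 0 < δ) (l r : BTree) :
    ∫⁻ x, ENNReal.ofReal x ∂(treePMF δ (.node l r)).toMeasure =
      ∫⁻ a, ∫⁻ b, ENNReal.ofReal (a + b) ∂(treePMF δ r).toMeasure ∂(treePMF δ l).toMeasure := by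
  rw [lintegral_treePMF_node]
  refine lintegral_congr_ae ((ae_mem_range_pow_treePMF l).mono fun a ha => ?_)
  refine lintegral_congr_ae ((ae_mem_range_pow_treePMF r).mono fun b hb => ?_)
  exact lintegral_roundPMF_ofReal_id hδ
    (by linarith [one_le_of_mem_range_pow hδ.le ha, one_le_of_mem_range_pow hδ.le hb])

theorem lintegral_treePMF_node_ofReal_sq_le (hδ : 0 < δ) (l r : BTree) :
    ∫⁻ x, ENNReal.ofReal (x ^ 2) ∂(treePMF δ (.node l r)).toMeasure ≤
      ∫⁻ a, ∫⁻ b, ENNReal.ofReal (a ^ 2 + b ^ 2 + 2 * (1 + δ) * a * b)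
        ∂(treePMF δ r).toMeasure ∂(treePMF δ l).toMeasure := by
  rw [lintegral_treePMF_node]
  refine lintegral_mono_ae ((ae_mem_range_pow_treePMF l).mono fun a ha => ?_)
  refine lintegral_mono_ae ((ae_mem_range_pow_treePMF r).mono fun b hb => ?_)
  have ha1 := one_le_of_mem_range_pow hδ.le ha
  have hb1 := one_le_of_mem_range_pow hδ.le hb
  refine (lintegral_roundPMF_ofReal_sq_le hδ (by linarith)).trans (ENNReal.ofReal_le_ofReal ?_)
  nlinarith [add_mul_sub_rfloor_le hδ ha hb]

variable (hδ : 0 < δ)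
include hδ

theorem lintegral_treePMF_ofReal_id (t : BTree) (h : ∀ y ∈ t.leafScores, 1 ≤ y) :
    ∫⁻ x, ENNReal.ofReal x ∂(treePMF δ t).toMeasure = ENNReal.ofReal t.leafScores.sum := by
  induction t with
  | leaf y =>
    simpa [treePMF, BTree.leafScores] using
      lintegral_roundPMF_ofReal_id hδ (h y (List.mem_singleton_self y))
  | node l r ihl ihr =>
    obtain ⟨hl, hr⟩ := List.forall_mem_append.1 h
    rw [lintegral_treePMF_node_ofReal_id hδ, lintegral_lintegral_ofReal_add
      (ae_nonneg_treePMF hδ.le l) (ae_nonneg_treePMF hδ.le r), ihl hl, ihr hr,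
      ← ENNReal.ofReal_add (by linarith [l.one_le_sum_leafScores hl])
        (by linarith [r.one_le_sum_leafScores hr])]
    simp only [BTree.leafScores, List.sum_append]

theorem lintegral_treePMF_ofReal_sq_le (t : BTree) (h : ∀ y ∈ t.leafScores, 1 ≤ y) :
    ∫⁻ x, ENNReal.ofReal (x ^ 2) ∂(treePMF δ t).toMeasure ≤
      ENNReal.ofReal ((1 + δ) * t.leafScores.sum ^ 2) := by
  induction t with
  | leaf y =>
    have hy := h y (List.mem_singleton_self y)
    refine (lintegral_roundPMF_ofReal_sq_le hδ hy).trans (ENNReal.ofReal_le_ofReal ?_)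
    have := mul_pos (mul_pos hδ (by linarith)) (rfloor_pos (y := y) hδ)
    simp only [BTree.leafScores, List.sum_singleton]
    nlinarith
  | node l r ihl ihr =>
    obtain ⟨hl, hr⟩ := List.forall_mem_append.1 h
    have hSl := l.one_le_sum_leafScores hl
    have hSr := r.one_le_sum_leafScores hr
    calc ∫⁻ x, ENNReal.ofReal (x ^ 2) ∂(treePMF δ (.node l r)).toMeasure
        ≤ ∫⁻ a, ENNReal.ofReal (a ^ 2) ∂(treePMF δ l).toMeasure +
            ∫⁻ b, ENNReal.ofReal (b ^ 2) ∂(treePMF δ r).toMeasure +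
            ENNReal.ofReal (2 * (1 + δ)) *
              (ENNReal.ofReal l.leafScores.sum * ENNReal.ofReal r.leafScores.sum) := by
          rw [← lintegral_treePMF_ofReal_id hδ l hl, ← lintegral_treePMF_ofReal_id hδ r hr,
            ← lintegral_lintegral_ofReal_sq_add_mul (by positivity) (ae_nonneg_treePMF hδ.le l)
              (ae_nonneg_treePMF hδ.le r)]
          exact lintegral_treePMF_node_ofReal_sq_le hδ l r
      _ ≤ ENNReal.ofReal ((1 + δ) * l.leafScores.sum ^ 2) +
            ENNReal.ofReal ((1 + δ) * r.leafScores.sum ^ 2) +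
            ENNReal.ofReal (2 * (1 + δ)) *
              (ENNReal.ofReal l.leafScores.sum * ENNReal.ofReal r.leafScores.sum) := by
          gcongr
          exacts [ihl hl, ihr hr]
      _ = ENNReal.ofReal ((1 + δ) * (BTree.node l r).leafScores.sum ^ 2) := by
          rw [← ENNReal.ofReal_mul (by positivity), ← ENNReal.ofReal_mul (by positivity),
            ← ENNReal.ofReal_add (by positivity) (by positivity),
            ← ENNReal.ofReal_add (by positivity) (by positivity)]
          simp only [BTree.leafScores, List.sum_append]
          ring_nf

end Tree

section Moments

variable {μ : Measure ℝ}

theorem integral_id_eq_of_lintegral {m : ℝ} (h0 : ∀ᵐ x ∂μ, 0 ≤ x) (hm : 0 ≤ m)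
    (h : ∫⁻ x, ENNReal.ofReal x ∂μ = ENNReal.ofReal m) : ∫ x, x ∂μ = m := by
  rw [integral_eq_lintegral_of_nonneg_ae h0 aestronglyMeasurable_id, h, ENNReal.toReal_ofReal hm]

theorem memLp_id_two_of_lintegral_sq_ne_top (h : ∫⁻ x, ENNReal.ofReal (x ^ 2) ∂μ ≠ ∞) :
    MemLp (fun x => x) 2 μ := by
  refine (memLp_two_iff_integrable_sq (f := fun x => x) aestronglyMeasurable_id).2 ?_
  exact ⟨by fun_prop, (hasFiniteIntegral_iff_ofReal (ae_of_all _ fun x => sq_nonneg x)).2 h.lt_top⟩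

theorem variance_id_le_of_lintegral [IsProbabilityMeasure μ] {m c : ℝ} (h0 : ∀ᵐ x ∂μ, 0 ≤ x)
    (hm : 0 ≤ m) (hmean : ∫⁻ x, ENNReal.ofReal x ∂μ = ENNReal.ofReal m) (hc : 0 ≤ c)
    (hsq : ∫⁻ x, ENNReal.ofReal (x ^ 2) ∂μ ≤ ENNReal.ofReal c) :
    variance (fun x => x) μ ≤ c - m ^ 2 := by
  rw [variance_eq_sub
      (memLp_id_two_of_lintegral_sq_ne_top (ne_top_of_le_ne_top ENNReal.ofReal_ne_top hsq)),
    integral_id_eq_of_lintegral h0 hm hmean]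
  have : ∫ x, x ^ 2 ∂μ ≤ c := by
    rw [integral_eq_lintegral_of_nonneg_ae (ae_of_all _ fun x => sq_nonneg x) (by fun_prop)]
    exact ENNReal.toReal_le_of_le_ofReal hc hsq
  simpa using this

theorem measure_lt_abs_sub_le_of_variance_le [IsFiniteMeasure μ] {m v c : ℝ}
    (hX : MemLp (fun x => x) 2 μ) (hmean : ∫ x, x ∂μ = m) (hvar : variance (fun x => x) μ ≤ v)
    (hc : 0 < c) :
    μ {x | c < |x - m|} ≤ ENNReal.ofReal (v / c ^ 2) := by
  refine (measure_mono fun x hx => ?_).trans ((meas_ge_le_variance_div_sq hX hc).trans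
    (ENNReal.ofReal_le_ofReal (by gcongr)))
  rw [Set.mem_ofPred_eq, hmean]
  exact le_of_lt hx

end Moments

theorem div_sq_le_one_fourth {δ δ' : ℝ} (hδ : 0 ≤ δ) (h : 2 * Real.sqrt δ ≤ δ') :
    δ / δ' ^ 2 ≤ 1 / 4 := by
  have : (2 * Real.sqrt δ) ^ 2 ≤ δ' ^ 2 := pow_le_pow_left₀ (by positivity) h 2
  rw [mul_pow, Real.sq_sqrt hδ] at this
  exact div_le_of_le_mul₀ (sq_nonneg _) (by norm_num) (by linarith)

theorem treePMF_concentration_general (δ δ' : ℝ) (hδ0 : 0 < δ)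
    (hδ' : 2 * Real.sqrt δ ≤ δ') (t : BTree) (hscores : ∀ y ∈ t.leafScores, 1 ≤ y) :
    pmfVar (treePMF δ t) ≤ δ * t.leafScores.sum ^ 2 ∧
    (treePMF δ t).toMeasure {x | δ' * t.leafScores.sum < |x - t.leafScores.sum|} ≤
      ENNReal.ofReal (δ / δ' ^ 2) ∧
    δ / δ' ^ 2 ≤ 1 / 4 := by
  have hS := t.one_le_sum_leafScores hscores
  have hδ'0 : 0 < δ' := lt_of_lt_of_le (by positivity) hδ'
  have hnonneg := ae_nonneg_treePMF hδ0.le t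
  have hmean := lintegral_treePMF_ofReal_id hδ0 t hscores
  have hsq := lintegral_treePMF_ofReal_sq_le hδ0 t hscores
  have hvar : pmfVar (treePMF δ t) ≤ δ * t.leafScores.sum ^ 2 := by
    have := variance_id_le_of_lintegral hnonneg (by positivity) hmean (by positivity) hsq
    rw [pmfVar]
    linarith
  refine ⟨hvar, ?_, div_sq_le_one_fourth hδ0.le hδ'⟩
  calc (treePMF δ t).toMeasure {x | δ' * t.leafScores.sum < |x - t.leafScores.sum|}
      ≤ ENNReal.ofReal (δ * t.leafScores.sum ^ 2 / (δ' * t.leafScores.sum) ^ 2) :=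
        measure_lt_abs_sub_le_of_variance_le
          (memLp_id_two_of_lintegral_sq_ne_top (ne_top_of_le_ne_top ENNReal.ofReal_ne_top hsq))
          (integral_id_eq_of_lintegral hnonneg (by positivity) hmean) hvar (by positivity)
    _ = ENNReal.ofReal (δ / δ' ^ 2) := by
        congr 1
        field_simp

/-- Under the rounded binary-tree process with parameter `δ ∈ (0,1)`,
with `S = Σ_{l ∈ L(root)} score(l)` the total leaf score and `δ' ≥ 2√δ`:
`Var(X_root) ≤ δ·S²`, and consequently `P(|X_root − S| > δ'·S) ≤ δ/δ'² ≤ 1/4`. -/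
theorem treePMF_concentration (δ δ' : ℝ) (hδ0 : 0 < δ) (hδ1 : δ < 1)
    (hδ' : 2 * Real.sqrt δ ≤ δ') (t : BTree) (hscores : ∀ y ∈ t.leafScores, 1 ≤ y) :
    pmfVar (treePMF δ t) ≤ δ * t.leafScores.sum ^ 2 ∧
    (treePMF δ t).toMeasure {x | δ' * t.leafScores.sum < |x - t.leafScores.sum|} ≤
      ENNReal.ofReal (δ / δ' ^ 2) ∧
    δ / δ' ^ 2 ≤ 1 / 4 :=
  treePMF_concentration_general δ δ' hδ0 hδ' t hscores
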